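/- (Triple spread formula) Suppose a non-null triangle U, V, W has spreads s_U, s_V and s_W. Then (s_U + s_V + s_W)² = 2(s_U² + s_V² + s_W²) + 4·s_U·s_V·s_W. -/

import Mathlib

/-!
Put `a = V - U`, `b = W - U`, `x = Q(U,V)`, `y = Q(U,W)`, `p = B(a,b)`. Symmetry of `B` gives
the law of cosines `Q(V,W) = x + y - 2p`, and the numerators of the spreads at `V` and `W` are
`(x - p)²` and `(y - p)²`. After these substitutions, clearing the nonzero denominators turns the
triple spread formula into a polynomial identity in `x, y, p`.
-/

/-- The quadrance between points `U` and `W` with respect to the bilinear form `B`. -/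
def quadrance {F : Type*} [Field F] {M : Type*} [AddCommGroup M] [Module F M]
    (B : LinearMap.BilinForm F M) (U W : M) : F :=
  B (W - U) (W - U)

/-- The spread between the lines `U W` and `X Z` with respect to the bilinear form `B`. -/
def spread {F : Type*} [Field F] {M : Type*} [AddCommGroup M] [Module F M]
    (B : LinearMap.BilinForm F M) (U W X Z : M) : F :=
  1 - (B (W - U) (Z - X)) ^ 2 / (quadrance B U W * quadrance B X Z)

theorem triple_spread_identity {F : Type*} [Field F] {x y z : F} (p : F)
    (hx : x ≠ 0) (hy : y ≠ 0) (hz : z ≠ 0) (hcos : z = x + y - 2 * p) :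
    ((1 - p ^ 2 / (x * y)) + (1 - (x - p) ^ 2 / (x * z)) + (1 - (y - p) ^ 2 / (y * z))) ^ 2 =
      2 * ((1 - p ^ 2 / (x * y)) ^ 2 + (1 - (x - p) ^ 2 / (x * z)) ^ 2
        + (1 - (y - p) ^ 2 / (y * z)) ^ 2) +
      4 * (1 - p ^ 2 / (x * y)) * (1 - (x - p) ^ 2 / (x * z)) * (1 - (y - p) ^ 2 / (y * z)) := by
  field_simp
  subst hcos
  ring

section Quadrance

variable {F : Type*} [Field F] {M : Type*} [AddCommGroup M] [Module F M]
  (B : LinearMap.BilinForm F M)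

theorem quadrance_comm (U W : M) : quadrance B U W = quadrance B W U := by
  rw [quadrance, quadrance, ← neg_sub W U, map_neg, LinearMap.map_neg₂, neg_neg]

theorem apply_sub_sub_eq_add_sub_two_mul (hB : ∀ x y : M, B x y = B y x) (a b : M) :
    B (b - a) (b - a) = B a a + B b b - 2 * B a b := by
  simp only [map_sub, LinearMap.sub_apply, hB b a]
  ring

theorem quadrance_eq_law_of_cosines (hB : ∀ x y : M, B x y = B y x) (U V W : M) :
    quadrance B V W = quadrance B U V + quadrance B U W - 2 * B (V - U) (W - U) := by
  have hsub : W - V = (W - U) - (V - U) := by abel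
  rw [quadrance, quadrance, quadrance, hsub, apply_sub_sub_eq_add_sub_two_mul B hB]

theorem apply_sub_sub_eq_quadrance_sub (U V W : M) :
    B (U - V) (W - V) = quadrance B U V - B (V - U) (W - U) := by
  have hUV : U - V = -(V - U) := (neg_sub V U).symm
  have hWV : W - V = (W - U) - (V - U) := by abel
  rw [quadrance, hUV, hWV, LinearMap.map_neg₂, map_sub]
  ring

end Quadrance

theorem triple_spread_formula_general
    {F : Type*} [Field F]
    {M : Type*} [AddCommGroup M] [Module F M]
    (B : LinearMap.BilinForm F M) (hsym : ∀ x y : M, B x y = B y x)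
    (U V W : M)
    (hQU : quadrance B V W ≠ 0) (hQV : quadrance B U W ≠ 0)
    (hQW : quadrance B U V ≠ 0)
 :
    (spread B U V U W + spread B V U V W + spread B W U W V) ^ 2 =
      2 * (spread B U V U W ^ 2 + spread B V U V W ^ 2 + spread B W U W V ^ 2) +
        4 * spread B U V U W * spread B V U V W * spread B W U W V := by
  have hV : B (U - V) (W - V) = quadrance B U V - B (V - U) (W - U) :=
    apply_sub_sub_eq_quadrance_sub B U V W
  have hW : B (U - W) (V - W) = quadrance B U W - B (V - U) (W - U) := by
    rw [apply_sub_sub_eq_quadrance_sub B U W V, hsym]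
  simp only [spread, hV, hW, quadrance_comm B V U, quadrance_comm B W U, quadrance_comm B W V]
  exact triple_spread_identity _ hQW hQV hQU (quadrance_eq_law_of_cosines B hsym U V W)

theorem triple_spread_formula
    {F : Type*} [Field F] (hchar : (2 : F) ≠ 0)
    {M : Type*} [AddCommGroup M] [Module F M]
    (B : LinearMap.BilinForm F M) (hsym : ∀ x y : M, B x y = B y x)
    (U V W : M) (hUV : U ≠ V) (hUW : U ≠ W) (hVW : V ≠ W)
    (hncol : ∀ a b : F, a • (V - U) + b • (W - U) = 0 → a = 0 ∧ b = 0)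
    (hQU : quadrance B V W ≠ 0) (hQV : quadrance B U W ≠ 0)
    (hQW : quadrance B U V ≠ 0)
 :
    (spread B U V U W + spread B V U V W + spread B W U W V) ^ 2 =
      2 * (spread B U V U W ^ 2 + spread B V U V W ^ 2 + spread B W U W V ^ 2) +
        4 * spread B U V U W * spread B V U V W * spread B W U W V :=
  triple_spread_formula_general B hsym U V W hQU hQV hQW
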